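/- Let α > -1, β > -1, t ∈ ℝ and n ∈ ℕ. Then ∫_{-1}^1 e^{x t} (1-x)^α (1+x)^β P_n^{(α,β)}(x) dx = (t^n/n!) · 2^{α+β+n+1} · (Γ(α+n+1) Γ(β+n+1)/Γ(α+β+2n+2)) · e^{-t} · ₁F₁(β+n+1; α+β+2n+2; 2t). -/

import Mathlib

/-!
Substituting `x = 2u - 1` turns the integral into
`2^(α+β+1) e^(-t) ∫₀¹ e^(2tu) u^β (1-u)^α P_n^{(α,β)}(2u-1) du`. Expanding `e^(2tu)` in powers of
`u`, the `m`-th moment is a finite sum of Beta integrals, which the Chu–Vandermonde identity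
collapses to a multiple of `(m+1-n)_n`. This vanishes for `m < n`, and re-indexing `m = n + j`
leaves exactly the series of `₁F₁(β+n+1; α+β+2n+2; 2t)`.
-/

/-- The Pochhammer symbol `(a)_n = a(a+1)⋯(a+n-1)`. -/
noncomputable def poch (a : ℝ) (n : ℕ) : ℝ := ∏ i ∈ Finset.range n, (a + i)

/-- The Jacobi polynomial `P_n^{(α,β)}(x)`. -/
noncomputable def jacobiP (n : ℕ) (α β x : ℝ) : ℝ :=
  poch (α + 1) n / n.factorial *
    ∑ k ∈ Finset.range (n + 1),
      poch (-(n : ℝ)) k * poch ((n : ℝ) + α + β + 1) k /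
        (poch (α + 1) k * k.factorial) * ((1 - x) / 2) ^ k

/-- The confluent hypergeometric function `₁F₁(a; c; z)`. -/
noncomputable def oneF1 (a c z : ℝ) : ℝ :=
  ∑' n : ℕ, poch a n * z ^ n / (poch c n * n.factorial)

open MeasureTheory Set

section Pochhammer

open Finset Polynomial

lemma poch_succ (a : ℝ) (n : ℕ) : poch a (n + 1) = poch a n * (a + n) :=
  prod_range_succ _ n

lemma poch_eq_ascPochhammer_eval (a : ℝ) (n : ℕ) : poch a n = (ascPochhammer ℝ n).eval a := by
  induction n with
  | zero => simp [poch]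
  | succ n ih => rw [ascPochhammer_succ_eval, ← ih, poch_succ]

lemma poch_pos {a : ℝ} (ha : 0 < a) (n : ℕ) : 0 < poch a n := by
  rw [poch_eq_ascPochhammer_eval]; exact ascPochhammer_pos n a ha

lemma poch_add (a : ℝ) (m n : ℕ) : poch a (m + n) = poch a m * poch (a + m) n := by
  simp only [poch, prod_range_add, Nat.cast_add, add_assoc]

lemma Gamma_add_nat_eq_mul_poch {a : ℝ} (ha : 0 < a) (n : ℕ) :
    Real.Gamma (a + n) = Real.Gamma a * poch a n := by
  induction n with
  | zero => simp [poch]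
  | succ n ih =>
    rw [Nat.cast_succ, ← add_assoc, Real.Gamma_add_one (by positivity), ih, poch_succ]
    ring

lemma poch_neg_nat (n k : ℕ) : poch (-n) k = (-1) ^ k * n.descFactorial k := by
  rw [poch_eq_ascPochhammer_eval, ascPochhammer_eval_neg_eq_descPochhammer,
    descPochhammer_eval_eq_descFactorial]

lemma poch_nat_add_one (j n : ℕ) : poch (j + 1) n = (j + n).factorial / j.factorial := by
  rw [eq_div_iff (by positivity), poch_eq_ascPochhammer_eval, mul_comm]
  exact_mod_cast (factorial_mul_ascPochhammer ℝ j n)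

lemma poch_nat_sub_eq_zero {m n : ℕ} (h : m < n) : poch (m + 1 - n) n = 0 :=
  prod_eq_zero (i := n - 1 - m) (by simp; omega)
    (by rw [Nat.cast_sub (by omega), Nat.cast_sub (by omega)]; push_cast; ring)

lemma poch_eq_descPochhammer_smeval (a : ℝ) (k : ℕ) :
    poch a k = (descPochhammer ℤ k).smeval (a + k - 1) := by
  rw [descPochhammer_smeval_eq_ascPochhammer, ascPochhammer_smeval_eq_eval,
    poch_eq_ascPochhammer_eval]
  ring_nf

lemma neg_one_pow_mul_poch (b : ℝ) (k : ℕ) :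
    (-1) ^ k * poch b k = (descPochhammer ℤ k).smeval (-b) := by
  rw [← aeval_eq_smeval, aeval_def, ← eval_map, descPochhammer_map, ← neg_neg b,
    poch_eq_ascPochhammer_eval, ascPochhammer_eval_neg_eq_descPochhammer, neg_neg, ← mul_assoc,
    ← mul_pow, neg_one_mul, neg_neg, one_pow, one_mul]

/-- Chu–Vandermonde, read off from Mathlib's falling-factorial version through
`(-1)^k (b)_k = (-b)^{(k)}` and `(c+k)_{n-k} = (c+n-1)^{(n-k)}` (falling factorials). -/
lemma sum_choose_mul_poch_mul_poch (n : ℕ) (b c : ℝ) :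
    ∑ k ∈ range (n + 1), n.choose k * ((-1) ^ k * poch b k) * poch (c + k) (n - k) =
      poch (c - b) n := by
  have h := Ring.descPochhammer_smeval_add (r := -b) (s := c + n - 1) n (Commute.all _ _)
  rw [Nat.sum_antidiagonal_eq_sum_range_succ
    (fun i j => (n.choose i : ℝ) * ((descPochhammer ℤ i).smeval (-b) *
      (descPochhammer ℤ j).smeval (c + n - 1))) n] at h
  rw [poch_eq_descPochhammer_smeval, show c - b + n - 1 = -b + (c + n - 1) by ring, h]
  refine sum_congr rfl fun k hk => ?_
  rw [neg_one_pow_mul_poch, poch_eq_descPochhammer_smeval,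
    Nat.cast_sub (Nat.le_of_lt_succ (mem_range.1 hk))]
  ring_nf

lemma sum_poch_neg_nat_mul_poch_div (n : ℕ) (b : ℝ) {c : ℝ} (hc : poch c n ≠ 0) :
    ∑ k ∈ range (n + 1), poch (-n) k * poch b k / (poch c k * k.factorial) =
      poch (c - b) n / poch c n := by
  rw [eq_div_iff hc, ← sum_choose_mul_poch_mul_poch, sum_mul]
  refine sum_congr rfl fun k hk => ?_
  have hsplit : poch c n = poch c k * poch (c + k) (n - k) := by
    rw [← poch_add, Nat.add_sub_cancel' (Nat.le_of_lt_succ (mem_range.1 hk))]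
  have hck : poch c k ≠ 0 := left_ne_zero_of_mul (hsplit ▸ hc)
  rw [hsplit, poch_neg_nat, Nat.descFactorial_eq_factorial_mul_choose]
  field_simp
  push_cast
  ring

end Pochhammer

lemma ofReal_cpow_mul_one_sub_cpow {p q u : ℝ} (hu : u ∈ Ioo 0 1) :
    (u : ℂ) ^ ((p : ℂ) + 1 - 1) * (1 - (u : ℂ)) ^ ((q : ℂ) + 1 - 1) =
      ((u ^ p * (1 - u) ^ q : ℝ) : ℂ) := by
  rw [add_sub_cancel_right, add_sub_cancel_right, Complex.ofReal_mul,
    Complex.ofReal_cpow hu.1.le, Complex.ofReal_cpow (sub_nonneg.2 hu.2.le), Complex.ofReal_sub,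
    Complex.ofReal_one]

lemma integrableOn_rpow_mul_one_sub_rpow {p q : ℝ} (hp : -1 < p) (hq : -1 < q) :
    IntegrableOn (fun u : ℝ => u ^ p * (1 - u) ^ q) (Ioo 0 1) := by
  have hC := (Complex.betaIntegral_convergent (u := (p : ℂ) + 1) (v := (q : ℂ) + 1)
    (by simp; linarith) (by simp; linarith)).1.mono_set Ioo_subset_Ioc_self
  have hR := (hC.congr_fun (fun u hu => ofReal_cpow_mul_one_sub_cpow hu) measurableSet_Ioo).re
  simpa [IntegrableOn] using hR

lemma integral_rpow_mul_one_sub_rpow {p q : ℝ} (hp : -1 < p) (hq : -1 < q) :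
    ∫ u in Ioo 0 1, u ^ p * (1 - u) ^ q =
      Real.Gamma (p + 1) * Real.Gamma (q + 1) / Real.Gamma (p + q + 2) := by
  have hG := Complex.Gamma_mul_Gamma_eq_betaIntegral (s := (p : ℂ) + 1) (t := (q : ℂ) + 1)
    (by simp; linarith) (by simp; linarith)
  rw [Complex.betaIntegral, intervalIntegral.integral_of_le zero_le_one,
    integral_Ioc_eq_integral_Ioo,
    setIntegral_congr_fun measurableSet_Ioo (fun u hu => ofReal_cpow_mul_one_sub_cpow hu),
    integral_complex_ofReal,
    show (p : ℂ) + 1 + ((q : ℂ) + 1) = ((p + q + 2 : ℝ) : ℂ) by push_cast; ring,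
    ← Complex.ofReal_one, ← Complex.ofReal_add, ← Complex.ofReal_add, Complex.Gamma_ofReal,
    Complex.Gamma_ofReal, Complex.Gamma_ofReal] at hG
  have hG' : Real.Gamma (p + 1) * Real.Gamma (q + 1) =
      Real.Gamma (p + q + 2) * ∫ u in Ioo 0 1, u ^ p * (1 - u) ^ q := by
    exact_mod_cast hG
  rw [hG', mul_div_cancel_left₀ _ (Real.Gamma_pos_of_pos (by linarith)).ne']

lemma integral_rpow_mul_one_sub_rpow_add_nat {p q : ℝ} (hp : -1 < p) (hq : -1 < q) (k : ℕ) :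
    ∫ u in Ioo 0 1, u ^ p * (1 - u) ^ (q + k) =
      Real.Gamma (p + 1) * Real.Gamma (q + 1) / Real.Gamma (p + q + 2) *
        (poch (q + 1) k / poch (p + q + 2) k) := by
  have hpq : 0 < p + q + 2 := by linarith
  rw [integral_rpow_mul_one_sub_rpow hp (by linarith [k.cast_nonneg (α := ℝ)]),
    show q + k + 1 = q + 1 + k by ring, show p + (q + k) + 2 = p + q + 2 + k by ring,
    Gamma_add_nat_eq_mul_poch (by linarith), Gamma_add_nat_eq_mul_poch hpq]
  have := (poch_pos hpq k).ne'
  have := (Real.Gamma_pos_of_pos hpq).ne'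
  field_simp

lemma hasSum_integral_exp_mul {w : ℝ → ℝ} (hw : IntegrableOn w (Ioo 0 1)) (z : ℝ) :
    HasSum (fun m : ℕ => z ^ m / m.factorial * ∫ u in Ioo 0 1, u ^ m * w u)
      (∫ u in Ioo 0 1, Real.exp (z * u) * w u) := by
  have hpow : ∀ m : ℕ, ∀ᵐ u ∂volume.restrict (Ioo (0 : ℝ) 1), ‖u ^ m‖ ≤ 1 := fun m =>
    (ae_restrict_mem measurableSet_Ioo).mono fun u hu => by
      rw [norm_pow, Real.norm_of_nonneg hu.1.le]; exact pow_le_one₀ hu.1.le hu.2.le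
  simp_rw [← integral_const_mul]
  refine hasSum_integral_of_dominated_convergence (fun m u => |z| ^ m / m.factorial * ‖w u‖)
    (fun m => ((hw.bdd_mul (by fun_prop) (hpow m)).const_mul _).aestronglyMeasurable)
    (fun m => (hpow m).mono fun u hu => ?_)
    (ae_of_all _ fun u => (Real.summable_pow_div_factorial |z|).mul_right _) ?_
    (ae_of_all _ fun u => ?_)
  · rw [norm_mul, norm_mul, norm_div, norm_pow, Real.norm_natCast, Real.norm_eq_abs]
    gcongr
    exact mul_le_of_le_one_left (norm_nonneg _) hu
  · simp_rw [tsum_mul_right]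
    exact hw.norm.const_mul _
  · rw [Real.exp_eq_exp_ℝ]
    refine ((NormedSpace.expSeries_div_hasSum_exp (z * u)).mul_right (w u)).congr_fun fun m => ?_
    ring

section Jacobi

open Finset

variable {α β : ℝ}

lemma continuous_jacobiP (n : ℕ) (α β : ℝ) : Continuous (jacobiP n α β) := by
  unfold jacobiP; fun_prop

lemma integrableOn_jacobi_weight (hα : -1 < α) (hβ : -1 < β) (n : ℕ) :
    IntegrableOn (fun u => u ^ β * (1 - u) ^ α * jacobiP n α β (2 * u - 1)) (Ioo 0 1) :=
  (integrableOn_rpow_mul_one_sub_rpow hβ hα).mul_continuousOn_of_subset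
    ((continuous_jacobiP n α β).comp (by fun_prop)).continuousOn measurableSet_Ioo isCompact_Icc
    Ioo_subset_Icc_self

lemma integral_pow_mul_jacobi_weight (hα : -1 < α) (hβ : -1 < β) (n m : ℕ) :
    ∫ u in Ioo 0 1, u ^ m * (u ^ β * (1 - u) ^ α * jacobiP n α β (2 * u - 1)) =
      Real.Gamma (α + n + 1) * Real.Gamma (β + m + 1) / n.factorial *
        poch (m + 1 - n) n / Real.Gamma (α + β + m + n + 2) := by
  set coeff : ℕ → ℝ := fun k =>
    poch (-n) k * poch (n + α + β + 1) k / (poch (α + 1) k * k.factorial)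
  have hβm : -1 < β + m := by linarith [m.cast_nonneg (α := ℝ)]
  have hc : 0 < β + m + α + 2 := by linarith
  have hpt : ∀ u ∈ Ioo (0 : ℝ) 1, u ^ m * (u ^ β * (1 - u) ^ α * jacobiP n α β (2 * u - 1)) =
      poch (α + 1) n / n.factorial *
        ∑ k ∈ range (n + 1), coeff k * (u ^ (β + m) * (1 - u) ^ (α + k)) := by
    intro u hu
    rw [jacobiP, show (1 - (2 * u - 1)) / 2 = 1 - u by ring]
    simp only [Finset.mul_sum]
    refine sum_congr rfl fun k _ => ?_
    rw [Real.rpow_add_natCast hu.1.ne', Real.rpow_add_natCast (sub_pos.2 hu.2).ne']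
    ring
  rw [setIntegral_congr_fun measurableSet_Ioo hpt, integral_const_mul, integral_finsetSum _
    fun k _ => (integrableOn_rpow_mul_one_sub_rpow hβm
      (by linarith [k.cast_nonneg (α := ℝ)])).const_mul _]
  simp_rw [integral_const_mul, integral_rpow_mul_one_sub_rpow_add_nat hβm hα]
  have hterm : ∀ k ∈ range (n + 1), coeff k * (Real.Gamma (β + m + 1) * Real.Gamma (α + 1) /
        Real.Gamma (β + m + α + 2) * (poch (α + 1) k / poch (β + m + α + 2) k)) =
      Real.Gamma (β + m + 1) * Real.Gamma (α + 1) / Real.Gamma (β + m + α + 2) *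
        (poch (-n) k * poch (n + α + β + 1) k / (poch (β + m + α + 2) k * k.factorial)) := by
    intro k _
    have := (poch_pos (by linarith : 0 < α + 1) k).ne'
    simp only [coeff]
    field_simp
  rw [sum_congr rfl hterm, ← Finset.mul_sum, sum_poch_neg_nat_mul_poch_div n _ (poch_pos hc n).ne',
    show β + m + α + 2 - (n + α + β + 1) = m + 1 - n by ring,
    show α + n + 1 = α + 1 + n by ring, Gamma_add_nat_eq_mul_poch (by linarith),
    show α + β + m + n + 2 = β + m + α + 2 + n by ring, Gamma_add_nat_eq_mul_poch hc]
  have := (poch_pos hc n).ne'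
  have := (Real.Gamma_pos_of_pos hc).ne'
  field_simp

lemma tsum_pow_div_factorial_mul_jacobi_moment (hα : -1 < α) (hβ : -1 < β) (n : ℕ) (z : ℝ) :
    ∑' m : ℕ, z ^ m / m.factorial * (Real.Gamma (α + n + 1) * Real.Gamma (β + m + 1) /
        n.factorial * poch (m + 1 - n) n / Real.Gamma (α + β + m + n + 2)) =
      z ^ n / n.factorial * (Real.Gamma (α + n + 1) * Real.Gamma (β + n + 1) /
        Real.Gamma (α + β + 2 * n + 2)) * oneF1 (β + n + 1) (α + β + 2 * n + 2) z := by
  set f : ℕ → ℝ := fun m => z ^ m / m.factorial * (Real.Gamma (α + n + 1) *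
    Real.Gamma (β + m + 1) / n.factorial * poch (m + 1 - n) n / Real.Gamma (α + β + m + n + 2))
  -- `P_n` is orthogonal to the moments `u^m`, `m < n`.
  have hsupp : Function.support f ⊆ range (· + n) := by
    intro m hm
    obtain hmn | hmn := lt_or_ge m n
    · exact absurd (by simp only [f, poch_nat_sub_eq_zero hmn]; ring) hm
    · exact ⟨m - n, Nat.sub_add_cancel hmn⟩
  have hb : 0 < β + n + 1 := by linarith [n.cast_nonneg (α := ℝ)]
  have hc : 0 < α + β + 2 * n + 2 := by linarith [n.cast_nonneg (α := ℝ)]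
  have hshift : ∀ j : ℕ, f (j + n) = z ^ n / n.factorial * (Real.Gamma (α + n + 1) *
      Real.Gamma (β + n + 1) / Real.Gamma (α + β + 2 * n + 2)) *
        (poch (β + n + 1) j * z ^ j / (poch (α + β + 2 * n + 2) j * j.factorial)) := by
    intro j
    simp only [f]
    rw [Nat.cast_add, show (j : ℝ) + n + 1 - n = j + 1 by ring, poch_nat_add_one,
      show β + (j + n) + 1 = β + n + 1 + j by ring, Gamma_add_nat_eq_mul_poch hb,
      show α + β + (j + n) + n + 2 = α + β + 2 * n + 2 + j by ring,
      Gamma_add_nat_eq_mul_poch hc, pow_add]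
    have := (poch_pos hc j).ne'
    have := (Real.Gamma_pos_of_pos hc).ne'
    field_simp
  rw [← (add_left_injective n).tsum_eq hsupp, tsum_congr hshift, tsum_mul_left, oneF1]

end Jacobi

lemma integral_neg_one_one_eq_two_mul (f : ℝ → ℝ) :
    ∫ x in (-1 : ℝ)..1, f x = 2 * ∫ u in Ioo 0 1, f (2 * u - 1) := by
  have h := intervalIntegral.integral_comp_mul_sub f (c := 2) two_ne_zero 1 (a := 0) (b := 1)
  rw [intervalIntegral.integral_of_le zero_le_one, integral_Ioc_eq_integral_Ioo] at h
  norm_num at h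
  rw [h]
  ring

/-- Evaluation of `∫_{-1}^1 e^{xt} (1-x)^α (1+x)^β P_n^{(α,β)}(x) dx`. -/
theorem jacobi_exponential_integral (α β : ℝ) (hα : -1 < α) (hβ : -1 < β)
    (t : ℝ) (n : ℕ) :
    ∫ x in (-1 : ℝ)..1,
        Real.exp (x * t) * (1 - x) ^ α * (1 + x) ^ β * jacobiP n α β x =
      t ^ n / n.factorial * (2 : ℝ) ^ (α + β + n + 1) *
        (Real.Gamma (α + n + 1) * Real.Gamma (β + n + 1) /
          Real.Gamma (α + β + 2 * n + 2)) *
        Real.exp (-t) * oneF1 (β + n + 1) (α + β + 2 * n + 2) (2 * t) := by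
  have hsubst : ∀ u ∈ Ioo (0 : ℝ) 1,
      Real.exp ((2 * u - 1) * t) * (1 - (2 * u - 1)) ^ α * (1 + (2 * u - 1)) ^ β *
          jacobiP n α β (2 * u - 1) =
        2 ^ (α + β) * Real.exp (-t) *
          (Real.exp (2 * t * u) * (u ^ β * (1 - u) ^ α * jacobiP n α β (2 * u - 1))) := by
    intro u hu
    rw [show 1 - (2 * u - 1) = 2 * (1 - u) by ring, show 1 + (2 * u - 1) = 2 * u by ring,
      show (2 * u - 1) * t = 2 * t * u + -t by ring, Real.exp_add,
      Real.mul_rpow zero_le_two (sub_pos.2 hu.2).le, Real.mul_rpow zero_le_two hu.1.le,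
      Real.rpow_add two_pos]
    ring
  have hseries := hasSum_integral_exp_mul (integrableOn_jacobi_weight hα hβ n) (2 * t)
  simp_rw [integral_pow_mul_jacobi_weight hα hβ] at hseries
  rw [integral_neg_one_one_eq_two_mul, setIntegral_congr_fun measurableSet_Ioo hsubst,
    integral_const_mul, ← hseries.tsum_eq, tsum_pow_div_factorial_mul_jacobi_moment hα hβ,
    mul_pow, Real.rpow_add_one two_ne_zero, Real.rpow_add_natCast two_ne_zero]
  ring
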